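/- For 0 < r < 1 and 0 < θ < π, setting φ = Arg(3 + r e^{iθ}), the inequalities 0 < θ + 2φ < π hold. -/
import Mathlib


open Real Complex

theorem theta_plus_two_phi (r θ : ℝ) (hr0 : 0 < r) (hr1 : r < 1)
    (hθ0 : 0 < θ) (hθπ : θ < π) :
    0 < θ + 2 * (3 + (r : ℂ) * Complex.exp (θ * Complex.I)).arg ∧
    θ + 2 * (3 + (r : ℂ) * Complex.exp (θ * Complex.I)).arg < π := by
  set z : ℂ := 3 + (r : ℂ) * Complex.exp (θ * Complex.I) with hz
  have hcos : Real.cos θ > -1 := by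
    have := Real.neg_one_le_cos θ
    rcases lt_or_eq_of_le this with h | h
    · exact h
    · exfalso
      have : Real.sin θ = 0 := by nlinarith [Real.sin_sq_add_cos_sq θ]
      have := Real.sin_pos_of_pos_of_lt_pi hθ0 hθπ
      linarith
  have hre : z.re = 3 + r * Real.cos θ := by
    simp [hz, Complex.exp_mul_I, Complex.cos_ofReal_re, Complex.sin_ofReal_re]
  have him : z.im = r * Real.sin θ := by
    simp [hz, Complex.exp_mul_I, Complex.cos_ofReal_re, Complex.sin_ofReal_re]
  have hsin : 0 < Real.sin θ := Real.sin_pos_of_pos_of_lt_pi hθ0 hθπ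
  have hrepos : 0 < z.re := by
    rw [hre]; nlinarith [Real.neg_one_le_cos θ]
  have himpos : 0 < z.im := by rw [him]; positivity
  have habs : |z.arg| < π / 2 := Complex.abs_arg_lt_pi_div_two_iff.mpr (Or.inl hrepos)
  have harg : z.arg = Real.arctan (z.im / z.re) := by
    rw [← Complex.tan_arg z, Real.arctan_tan (by linarith [abs_lt.mp habs] : -(π/2) < z.arg)
      (abs_lt.mp habs).2]
  constructor
  · have : 0 < z.arg := by
      rw [harg]
      calc (0:ℝ) = Real.arctan 0 := Real.arctan_zero.symm
        _ < Real.arctan (z.im / z.re) := Real.arctan_strictMono (div_pos himpos hrepos)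
    linarith
  · -- upper bound: arg z < (π - θ)/2
    have hhalf0 : 0 < θ / 2 := by linarith
    have hhalfπ : θ / 2 < π / 2 := by linarith
    have hs : 0 < Real.sin (θ / 2) := Real.sin_pos_of_pos_of_lt_pi hhalf0 (by linarith [Real.pi_pos])
    have hc : 0 < Real.cos (θ / 2) := Real.cos_pos_of_mem_Ioo ⟨by linarith, hhalfπ⟩
    have hy1 : -(π/2) < π/2 - θ/2 := by linarith
    have hy2 : π/2 - θ/2 < π/2 := by linarith
    have htan : Real.tan (π/2 - θ/2) = Real.cos (θ/2) / Real.sin (θ/2) := by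
      rw [Real.tan_pi_div_two_sub, Real.tan_eq_sin_div_cos, inv_div]
    have hkey : z.im / z.re < Real.tan (π/2 - θ/2) := by
      rw [htan, hre, him, div_lt_div_iff₀ (by nlinarith [Real.neg_one_le_cos θ]) hs]
      have hsinθ : Real.sin θ = 2 * Real.sin (θ/2) * Real.cos (θ/2) := by
        rw [← Real.sin_two_mul]; ring_nf
      have hcosθ : Real.cos θ = 1 - 2 * Real.sin (θ/2) ^ 2 := by
        have h1 : Real.cos (2 * (θ/2)) = 2 * Real.cos (θ/2) ^ 2 - 1 := Real.cos_two_mul _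
        have h2 := Real.sin_sq_add_cos_sq (θ/2)
        have : (2:ℝ) * (θ/2) = θ := by ring
        rw [this] at h1; linarith
      have hs1 : Real.sin (θ/2) ^ 2 ≤ 1 := Real.sin_sq_le_one _
      nlinarith [mul_pos hs hc]
    have : z.arg < π/2 - θ/2 := by
      rw [harg]
      calc Real.arctan (z.im / z.re) < Real.arctan (Real.tan (π/2 - θ/2)) :=
            Real.arctan_strictMono hkey
        _ = π/2 - θ/2 := Real.arctan_tan hy1 hy2
    linarith
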